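/- arXiv:1805.08491 — 4 statements merged into one kernel-verified Lean document; each statement's English description precedes it below -/
import Mathlib

section
/- Let 𝔤 be an n-dimensional real nilpotent Lie algebra with a nice basis, structure constants c_I, and let σ be a diagram involution. For any σ-diagonal metric g = ∑ᵢ gᵢ eⁱ⊗e^{σ(i)}, the Ricci operator is diagonal in the nice basis, and for each h one has 2·ric_h^h = ∑_{I={{i,j},k} ∈ I_Δ} x_I (δ_{hk} − δ_{hi} − δ_{hj}), where x_I = c_I c̃_I g_k/(g_i g_j); equivalently, the vector (2·ric_1^1, …, 2·ric_n^n) equals M_Δᵀ X. -/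
/-! In the nice basis both a σ-diagonal metric and its inverse are σ-diagonal, so every
contraction in the Ricci formula collapses to one term: `ric_h^k` becomes a double sum of
products `c_{ilk} c_{σi σl σh}` and `c_{hji} c_{σk σj σi}`. For `h ≠ k` all these products
vanish, because σ preserves the nonzero structure constants and in a nice basis a nonzero
`c_{ijk}` is determined by any two of its indices. For `h = k` both sums are sums of the
weights `x_I`, which are symmetric in `i, j` and vanish for `i = j`; folding them onto the
pairs `i < j` gives the `h`-th entry of `M_Δᵀ X`. -/

open scoped BigOperators

/-- The bilinear bracket on `Fin n → ℝ` determined by structure constants `c`. -/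
def bracket {n : ℕ} (c : Fin n → Fin n → Fin n → ℝ) (x y : Fin n → ℝ) : Fin n → ℝ :=
  fun k => ∑ i, ∑ j, x i * y j * c i j k

/-- `c` is the family of structure constants of a nilpotent Lie algebra for which
the standard basis of `Fin n → ℝ` is a nice basis. -/
structure IsNiceNilpotent {n : ℕ} (c : Fin n → Fin n → Fin n → ℝ) : Prop where
  skew : ∀ i j k, c i j k = - c j i k
  jacobi : ∀ x y z : Fin n → ℝ,
    bracket c (bracket c x y) z + bracket c (bracket c y z) x + bracket c (bracket c z x) y = 0
  nilpotent : ∃ N : ℕ, ∀ (v : Fin N → Fin n → ℝ) (w : Fin n → ℝ),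
    (List.ofFn v).foldr (bracket c) w = 0
  nice_k : ∀ i j k k', c i j k ≠ 0 → c i j k' ≠ 0 → k = k'
  nice_j : ∀ i j j' k, c i j k ≠ 0 → c i j' k ≠ 0 → j = j'

/-- Entry `h` of the row of the root matrix indexed by a bracket `[e i, e j] = c i j k • e k`:
the row vector `- eⁱ - eʲ + eᵏ`. -/
def rootRow {n : ℕ} (i j k h : Fin n) : ℤ :=
  (if k = h then 1 else 0) - (if i = h then 1 else 0) - (if j = h then 1 else 0)

/-- The mod 2 reduction of the root matrix entries. -/
def rootRow2 {n : ℕ} (i j k h : Fin n) : ZMod 2 := ((rootRow i j k h : ℤ) : ZMod 2)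

/-- The Ricci operator of the scalar product with matrix `g` in the nice basis,
`ric_h^k = ¼ g^{im} g^{lp} g_{hq} c_{ilk} c_{mpq} − ½ g^{km} g^{jp} g_{iq} c_{hji} c_{mpq}`. -/
noncomputable def Ric {n : ℕ} (c : Fin n → Fin n → Fin n → ℝ)
    (g : Matrix (Fin n) (Fin n) ℝ) : Matrix (Fin n) (Fin n) ℝ :=
  Matrix.of fun h k =>
    (1/4 : ℝ) * (∑ i, ∑ m, ∑ l, ∑ p, ∑ q,
        g⁻¹ i m * g⁻¹ l p * g h q * c i l k * c m p q)
    - (1/2 : ℝ) * (∑ m, ∑ j, ∑ p, ∑ i, ∑ q,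
        g⁻¹ k m * g⁻¹ j p * g i q * c h j i * c m p q)

/-- Condition (E): the Ricci operator equals `½ id`. -/
def EinsteinE {n : ℕ} (c : Fin n → Fin n → Fin n → ℝ)
    (g : Matrix (Fin n) (Fin n) ℝ) : Prop :=
  Ric c g = (1/2 : ℝ) • (1 : Matrix (Fin n) (Fin n) ℝ)

/-- The matrix of the `σ`-diagonal bilinear form `∑ᵢ gᵢ eⁱ ⊗ e^{σ i}`. -/
def sigmaDiag {n : ℕ} (σ : Equiv.Perm (Fin n)) (gv : Fin n → ℝ) :
    Matrix (Fin n) (Fin n) ℝ :=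
  Matrix.of fun i j => if σ i = j then gv i else 0

/-- `σ` is a diagram involution: it squares to the identity and preserves the
set of nonzero structure constants. -/
def IsDiagramInvolution {n : ℕ} (c : Fin n → Fin n → Fin n → ℝ)
    (σ : Equiv.Perm (Fin n)) : Prop :=
  (∀ i, σ (σ i) = i) ∧ ∀ i j k, c i j k ≠ 0 → c (σ i) (σ j) (σ k) ≠ 0

/-- The mod 2 root matrix `M_{Δ,2}` is surjective: every vector indexed by the brackets
`I_Δ` is of the form `M_{Δ,2} s`. -/
def SurjectiveType {n : ℕ} (c : Fin n → Fin n → Fin n → ℝ) : Prop :=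
  ∀ y : Fin n → Fin n → Fin n → ZMod 2, ∃ s : Fin n → ZMod 2,
    ∀ i j k, i < j → c i j k ≠ 0 → y i j k = ∑ h, rootRow2 i j k h * s h

open Finset

theorem sum_sum_eq_sum_sum_lt_add_swap {ι M : Type*} [Fintype ι] [LinearOrder ι]
    [AddCommMonoid M] (f : ι → ι → M) (hf : ∀ i, f i i = 0) :
    ∑ i, ∑ j, f i j = ∑ i, ∑ j, if i < j then f i j + f j i else 0 := by
  have hsplit : ∀ i j, f i j = (if i < j then f i j else 0) + if j < i then f i j else 0 := by
    intro i j
    rcases lt_trichotomy i j with hij | rfl | hij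
    · simp [hij, hij.not_gt]
    · simp [hf]
    · simp [hij, hij.not_gt]
  calc ∑ i, ∑ j, f i j
      = ∑ i, ∑ j, ((if i < j then f i j else 0) + if j < i then f i j else 0) :=
        sum_congr rfl fun i _ => sum_congr rfl fun j _ => hsplit i j
    _ = ∑ i, ∑ j, if i < j then f i j + f j i else 0 := by
        simp only [sum_add_distrib, ite_add_zero]
        rw [sum_comm (f := fun i j => if j < i then f i j else 0)]

theorem sum_sum_sum_lt_mul_rootRow {n : ℕ} (f : Fin n → Fin n → Fin n → ℝ)
    (hcomm : ∀ i j k, f j i k = f i j k) (hself : ∀ i k, f i i k = 0) (h : Fin n) :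
    ∑ i, ∑ j, ∑ k, (if i < j then f i j k * (rootRow i j k h : ℝ) else 0) =
      1 / 2 * ∑ i, ∑ j, f i j h - ∑ j, ∑ k, f h j k := by
  have hrow : ∀ i j, ∑ k, f i j k * (rootRow i j k h : ℝ) =
      f i j h - (if i = h then ∑ k, f i j k else 0) - if j = h then ∑ k, f i j k else 0 := by
    intro i j
    simp [rootRow, mul_sub, sum_sub_distrib]
  set H : Fin n → Fin n → ℝ := fun i j => f i j h / 2 - if i = h then ∑ k, f i j k else 0
  have hlt : ∀ i j, ∑ k, (if i < j then f i j k * (rootRow i j k h : ℝ) else 0) =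
      if i < j then H i j + H j i else 0 := by
    intro i j
    split_ifs
    · rw [hrow]
      simp only [H, hcomm j i]
      ring
    · simp
  simp only [hlt]
  rw [← sum_sum_eq_sum_sum_lt_add_swap H (by simp [H, hself])]
  simp only [H, sum_sub_distrib, ← sum_div, sum_ite_irrel, sum_const_zero, sum_ite_eq',
    mem_univ, if_true, one_div, sub_left_inj]
  ring

section SigmaDiag

variable {n : ℕ} {σ : Equiv.Perm (Fin n)}

theorem sigmaDiag_mul_sigmaDiag (hσ : Function.Involutive σ) (a b : Fin n → ℝ) :
    sigmaDiag σ a * sigmaDiag σ b = Matrix.diagonal fun i => a i * b (σ i) := by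
  ext i k
  rw [Matrix.mul_apply, sum_eq_single (σ i) (fun j _ hj => by simp [sigmaDiag, Ne.symm hj])
    (by simp)]
  simp [sigmaDiag, Matrix.diagonal_apply, hσ i]

theorem inv_sigmaDiag (hσ : Function.Involutive σ) {a : Fin n → ℝ} (ha : ∀ i, a i ≠ 0) :
    (sigmaDiag σ a)⁻¹ = sigmaDiag σ fun i => (a (σ i))⁻¹ := by
  apply Matrix.inv_eq_right_inv
  rw [sigmaDiag_mul_sigmaDiag hσ]
  simp [hσ _, ha]

end SigmaDiag

namespace IsNiceNilpotent

variable {n : ℕ} {c : Fin n → Fin n → Fin n → ℝ}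

theorem apply_self_eq_zero (hc : IsNiceNilpotent c) (i k : Fin n) : c i i k = 0 := by
  linarith [hc.skew i i k]

theorem left_eq_of_ne_zero (hc : IsNiceNilpotent c) {h k j i : Fin n} (hh : c h j i ≠ 0)
    (hk : c k j i ≠ 0) : h = k :=
  hc.nice_j j h k i (by rwa [hc.skew, neg_ne_zero]) (by rwa [hc.skew, neg_ne_zero])

end IsNiceNilpotent

theorem IsDiagramInvolution.apply_ne_zero_iff {n : ℕ} {c : Fin n → Fin n → Fin n → ℝ}
    {σ : Equiv.Perm (Fin n)} (hσ : IsDiagramInvolution c σ) {i j k : Fin n} :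
    c (σ i) (σ j) (σ k) ≠ 0 ↔ c i j k ≠ 0 :=
  ⟨fun hne => by simpa only [hσ.1] using hσ.2 _ _ _ hne, hσ.2 i j k⟩

section Ricci

variable {n : ℕ} {c : Fin n → Fin n → Fin n → ℝ} {σ : Equiv.Perm (Fin n)}
  {a : Fin n → ℝ}

theorem ric_sigmaDiag (hσ : Function.Involutive σ) (ha : ∀ i, a i ≠ 0)
    (hsym : ∀ i, a (σ i) = a i) (h k : Fin n) :
    Ric c (sigmaDiag σ a) h k =
      1 / 4 * ∑ i, ∑ l, (a i)⁻¹ * (a l)⁻¹ * a h * c i l k * c (σ i) (σ l) (σ h)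
      - 1 / 2 * ∑ j, ∑ i, (a k)⁻¹ * (a j)⁻¹ * a i * c h j i * c (σ k) (σ j) (σ i) := by
  rw [Ric, Matrix.of_apply, inv_sigmaDiag hσ ha]
  simp only [sigmaDiag, Matrix.of_apply, hsym, ite_mul, zero_mul, mul_ite, mul_zero,
    sum_ite_irrel, sum_const_zero, sum_ite_eq, mem_univ, if_true]

theorem ric_sigmaDiag_of_ne (hc : IsNiceNilpotent c) (hσ : IsDiagramInvolution c σ)
    (ha : ∀ i, a i ≠ 0) (hsym : ∀ i, a (σ i) = a i) {h k : Fin n} (hhk : h ≠ k) :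
    Ric c (sigmaDiag σ a) h k = 0 := by
  have hfirst : ∀ i l, c i l k * c (σ i) (σ l) (σ h) = 0 := fun i l => by
    by_contra hne
    obtain ⟨hk, hh⟩ := mul_ne_zero_iff.1 hne
    exact hhk (hc.nice_k i l h k (hσ.apply_ne_zero_iff.1 hh) hk)
  have hsecond : ∀ j i, c h j i * c (σ k) (σ j) (σ i) = 0 := fun j i => by
    by_contra hne
    obtain ⟨hh, hk⟩ := mul_ne_zero_iff.1 hne
    exact hhk (hc.left_eq_of_ne_zero hh (hσ.apply_ne_zero_iff.1 hk))
  simp [ric_sigmaDiag hσ.1 ha hsym, mul_assoc, hfirst, hsecond]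

/-- The weight `x_I = c_I c̃_I g_k / (g_i g_j)` of `I = {{i,j},k}`. -/
noncomputable def ricciWeight (c : Fin n → Fin n → Fin n → ℝ) (σ : Equiv.Perm (Fin n))
    (a : Fin n → ℝ) (i j k : Fin n) : ℝ :=
  c i j k * c (σ i) (σ j) (σ k) * a k / (a i * a j)

theorem ricciWeight_comm (hc : IsNiceNilpotent c) (i j k : Fin n) :
    ricciWeight c σ a j i k = ricciWeight c σ a i j k := by
  simp only [ricciWeight, hc.skew j i, hc.skew (σ j) (σ i)]
  ring

theorem ricciWeight_self (hc : IsNiceNilpotent c) (i k : Fin n) :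
    ricciWeight c σ a i i k = 0 := by
  simp [ricciWeight, hc.apply_self_eq_zero]

theorem two_mul_ric_sigmaDiag_self (hσ : Function.Involutive σ) (ha : ∀ i, a i ≠ 0)
    (hsym : ∀ i, a (σ i) = a i) (h : Fin n) :
    2 * Ric c (sigmaDiag σ a) h h =
      1 / 2 * ∑ i, ∑ j, ricciWeight c σ a i j h - ∑ j, ∑ k, ricciWeight c σ a h j k := by
  have hweight : ∀ i j k, ricciWeight c σ a i j k =
      (a i)⁻¹ * (a j)⁻¹ * a k * c i j k * c (σ i) (σ j) (σ k) := fun i j k => by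
    rw [ricciWeight, div_eq_mul_inv, mul_inv]
    ring
  rw [ric_sigmaDiag hσ ha hsym]
  simp only [hweight]
  ring

end Ricci

/-- For a σ-diagonal metric on a nice nilpotent Lie algebra, the Ricci operator is
diagonal in the nice basis and `2 ric_h^h = ∑_(I = {{i,j},k} ∈ I_Δ) x_I (δ_hk − δ_hi − δ_hj)`
with `x_I = c_I * c̃_I * g_k / (g_i * g_j)`; i.e. `(2 ric_1^1, …, 2 ric_n^n) = M_Δᵀ X`. -/
theorem sigmaDiagonal_ricci_diagonal
    (n : ℕ) (c : Fin n → Fin n → Fin n → ℝ) (hc : IsNiceNilpotent c)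
    (σ : Equiv.Perm (Fin n)) (hσ : IsDiagramInvolution c σ)
    (gv : Fin n → ℝ) (hgv : ∀ i, gv i ≠ 0) (hsym : ∀ i, gv (σ i) = gv i) :
    (∀ h k : Fin n, h ≠ k → Ric c (sigmaDiag σ gv) h k = 0) ∧
    (∀ h : Fin n, 2 * Ric c (sigmaDiag σ gv) h h =
      ∑ i, ∑ j, ∑ k,
        if i < j then
          c i j k * c (σ i) (σ j) (σ k) * gv k / (gv i * gv j) * ((rootRow i j k h : ℤ) : ℝ)
        else 0) := by
  refine ⟨fun h k hhk => ric_sigmaDiag_of_ne hc hσ hgv hsym hhk, fun h => ?_⟩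
  rw [two_mul_ric_sigmaDiag_self hσ.1 hgv hsym]
  exact (sum_sum_sum_lt_mul_rootRow _ (ricciWeight_comm hc) (ricciWeight_self hc) h).symm
end

section
/- Let 𝔤 be an n-dimensional real nilpotent Lie algebra with a nice basis, structure constants c_I, and root matrix M_Δ. If 𝔤 admits a diagonal metric satisfying condition (E) (ric = ½ id), then there exists a vector X = (x_I) ∈ ℝ^{I_Δ} such that: (K) M_Δᵀ X = (1,…,1) ∈ ℝⁿ; (H) x_I ≠ 0 for every I ∈ I_Δ; (L) the vector (logsign x_I) ∈ (ℤ/2)^{I_Δ} lies in the image of M_{Δ,2} acting on (ℤ/2)ⁿ. -/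
/-! For a diagonal metric `g = ∑ gᵢ eⁱ ⊗ eⁱ` on a nice basis, the diagonal entries of the Ricci
operator are `ric_h^h = ½ (M_Δᵀ X)_h`, where `X` has coordinates `x_I = c_I² g_k / (g_i g_j)`;
this uses only the skew-symmetry of the structure constants. Hence (E) is (K) for this `X`, each
`x_I` is nonzero since `c_I ≠ 0`, and `logsign x_I = logsign g_k - logsign g_i - logsign g_j` is the
`I`-th entry of `M_{Δ,2}` applied to `(logsign gᵢ)ᵢ`, which is (L). -/

open scoped BigOperators

/-- `logsign x` is `0` for positive and `1` for negative reals. -/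
noncomputable def logsign (x : ℝ) : ZMod 2 := if 0 < x then 0 else 1

open Finset

lemma logsign_of_pos {a : ℝ} (ha : 0 < a) : logsign a = 0 := if_pos ha

lemma logsign_mul {a b : ℝ} (ha : a ≠ 0) (hb : b ≠ 0) :
    logsign (a * b) = logsign a + logsign b := by
  unfold logsign
  rcases ha.lt_or_gt with ha | ha <;> rcases hb.lt_or_gt with hb | hb
  · simp [mul_pos_of_neg_of_neg ha hb, ha.not_gt, hb.not_gt]; decide
  · simp [(mul_neg_of_neg_of_pos ha hb).not_gt, ha.not_gt, hb]
  · simp [(mul_neg_of_pos_of_neg ha hb).not_gt, ha, hb.not_gt]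
  · simp [mul_pos ha hb, ha, hb]

lemma logsign_inv (a : ℝ) : logsign a⁻¹ = logsign a := by
  simp [logsign, inv_pos]

lemma logsign_div {a b : ℝ} (ha : a ≠ 0) (hb : b ≠ 0) :
    logsign (a / b) = logsign a - logsign b := by
  rw [div_eq_mul_inv, logsign_mul ha (inv_ne_zero hb), logsign_inv, sub_eq_add_neg,
    ZMod.neg_eq_self_mod_two]

section RootRow

variable {n : ℕ} {R : Type*} [CommRing R]

lemma sum_rootRow_mul (i j k : Fin n) (s : Fin n → R) :
    ∑ h, (rootRow i j k h : R) * s h = s k - s i - s j := by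
  simp only [rootRow, Int.cast_sub, Int.cast_ite, Int.cast_one, Int.cast_zero, sub_mul,
    ite_mul, one_mul, zero_mul, sum_sub_distrib, sum_ite_eq, mem_univ, if_true]

lemma sum_rootRow2_mul (i j k : Fin n) (s : Fin n → ZMod 2) :
    ∑ h, rootRow2 i j k h * s h = s k - s i - s j :=
  sum_rootRow_mul i j k s

lemma sum_mul_rootRow (X : Fin n → Fin n → Fin n → R) (h : Fin n) :
    ∑ i, ∑ j, ∑ k, X i j k * (rootRow i j k h : R) =
      ∑ i, ∑ j, X i j h - ∑ j, ∑ k, X h j k - ∑ i, ∑ k, X i h k := by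
  simp only [rootRow, Int.cast_sub, Int.cast_ite, Int.cast_one, Int.cast_zero, mul_sub,
    mul_ite, mul_one, mul_zero, sum_sub_distrib, sum_ite_eq', sum_ite_irrel, sum_const_zero,
    mem_univ, if_true]

end RootRow

section DiagonalMetric

variable {n : ℕ} (c : Fin n → Fin n → Fin n → ℝ) (gv : Fin n → ℝ)

noncomputable def rootWeight (i j k : Fin n) : ℝ := c i j k ^ 2 * gv k / (gv i * gv j)

noncomputable def rootVector (i j k : Fin n) : ℝ := if i < j then rootWeight c gv i j k else 0

lemma inv_diagonal_of_ne_zero (hgv : ∀ i, gv i ≠ 0) :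
    (Matrix.diagonal gv)⁻¹ = Matrix.diagonal gv⁻¹ := by
  refine Matrix.inv_eq_right_inv ?_
  rw [Matrix.diagonal_mul_diagonal, ← Matrix.diagonal_one]
  exact congrArg Matrix.diagonal (funext fun i => mul_inv_cancel₀ (hgv i))

lemma Ric_diagonal_apply_self (hgv : ∀ i, gv i ≠ 0) (h : Fin n) :
    Ric c (Matrix.diagonal gv) h h =
      1/4 * ∑ i, ∑ j, rootWeight c gv i j h - 1/2 * ∑ j, ∑ k, rootWeight c gv h j k := by
  simp only [Ric, Matrix.of_apply, inv_diagonal_of_ne_zero gv hgv, Matrix.diagonal_apply,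
    Pi.inv_apply, ite_mul, mul_ite, zero_mul, mul_zero, sum_ite_irrel, sum_const_zero,
    sum_ite_eq, mem_univ, if_true, rootWeight]
  congr 2 <;> refine sum_congr rfl fun _ _ => sum_congr rfl fun _ _ => ?_ <;> field_simp

variable {c}

lemma rootVector_add_swap (hskew : ∀ i j k, c i j k = -c j i k) (i j k : Fin n) :
    rootVector c gv i j k + rootVector c gv j i k = rootWeight c gv i j k := by
  have hswap : rootWeight c gv j i k = rootWeight c gv i j k := by
    simp only [rootWeight, hskew j i k, neg_sq, mul_comm (gv j)]
  rcases lt_trichotomy i j with hij | rfl | hij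
  · simp [rootVector, hij, hij.not_gt]
  · simp [rootVector, rootWeight, eq_zero_of_neg_eq (hskew i i k).symm]
  · simp [rootVector, hij, hij.not_gt, hswap]

lemma Ric_diagonal_apply_self_eq_sum_rootRow (hskew : ∀ i j k, c i j k = -c j i k)
    (hgv : ∀ i, gv i ≠ 0) (h : Fin n) :
    Ric c (Matrix.diagonal gv) h h =
      1/2 * ∑ i, ∑ j, ∑ k, rootVector c gv i j k * (rootRow i j k h : ℝ) := by
  have hin : ∑ i, ∑ j, rootWeight c gv i j h = 2 * ∑ i, ∑ j, rootVector c gv i j h := by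
    simp only [← rootVector_add_swap gv hskew, sum_add_distrib]
    rw [sum_comm (f := fun i j => rootVector c gv j i h)]
    ring
  have hout : ∑ j, ∑ k, rootWeight c gv h j k =
      ∑ j, ∑ k, rootVector c gv h j k + ∑ i, ∑ k, rootVector c gv i h k := by
    simp only [← rootVector_add_swap gv hskew, sum_add_distrib]
  rw [Ric_diagonal_apply_self c gv hgv, sum_mul_rootRow, hin, hout]
  ring

lemma logsign_rootWeight (hgv : ∀ i, gv i ≠ 0) {i j k : Fin n} (hc : c i j k ≠ 0) :
    logsign (rootWeight c gv i j k) = ∑ h, rootRow2 i j k h * logsign (gv h) := by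
  have hc2 : c i j k ^ 2 ≠ 0 := pow_ne_zero 2 hc
  rw [sum_rootRow2_mul, rootWeight, logsign_div (mul_ne_zero hc2 (hgv k))
      (mul_ne_zero (hgv i) (hgv j)), logsign_mul hc2 (hgv k), logsign_mul (hgv i) (hgv j),
    logsign_of_pos (by positivity : 0 < c i j k ^ 2)]
  ring

end DiagonalMetric

/-- Necessary conditions: if a nice nilpotent Lie algebra admits a diagonal metric with
`ric = ½ id`, then some `X = (x_I)` satisfies (K) `M_Δᵀ X = (1,…,1)`, (H) `x_I ≠ 0` for
all `I ∈ I_Δ`, and (L) `(logsign x_I)` lies in the image of the mod 2 root matrix. -/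
theorem diagonal_einstein_necessary_conditions
    (n : ℕ) (c : Fin n → Fin n → Fin n → ℝ) (hc : IsNiceNilpotent c)
    (gv : Fin n → ℝ) (hgv : ∀ i, gv i ≠ 0)
    (hE : EinsteinE c (Matrix.diagonal gv)) :
    ∃ X : Fin n → Fin n → Fin n → ℝ,
      (∀ i j k : Fin n, ¬(i < j ∧ c i j k ≠ 0) → X i j k = 0) ∧
      (∀ h : Fin n, (∑ i, ∑ j, ∑ k, X i j k * ((rootRow i j k h : ℤ) : ℝ)) = 1) ∧
      (∀ i j k : Fin n, i < j → c i j k ≠ 0 → X i j k ≠ 0) ∧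
      (∃ s : Fin n → ZMod 2, ∀ i j k : Fin n, i < j → c i j k ≠ 0 →
        logsign (X i j k) = ∑ h, rootRow2 i j k h * s h) := by
  refine ⟨rootVector c gv, fun i j k hnot => ?support, fun h => ?K, fun i j k hij hI => ?H,
    ⟨fun h => logsign (gv h), fun i j k hij hI => ?L⟩⟩
  case support =>
    by_cases hij : i < j
    · simp [rootVector, rootWeight, hij, not_not.mp fun hI => hnot ⟨hij, hI⟩]
    · simp [rootVector, hij]
  case K =>
    have hric := congrFun (congrFun hE h) h
    rw [Ric_diagonal_apply_self_eq_sum_rootRow gv hc.skew hgv] at hric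
    simpa using hric
  case H =>
    simp only [rootVector, if_pos hij, rootWeight]
    exact div_ne_zero (mul_ne_zero (pow_ne_zero 2 hI) (hgv k)) (mul_ne_zero (hgv i) (hgv j))
  case L =>
    rw [rootVector, if_pos hij, logsign_rootWeight gv hgv hI]
end

section
/- Let M be an m×n matrix with integer entries and let g, h ∈ (ℝ*)ⁿ satisfy ∏_{j=1}^{n} g_j^{M_{Ij}} = ∏_{j=1}^{n} h_j^{M_{Ij}} for every row index I. Then there exist ε ∈ {±1}ⁿ whose associated vector s ∈ (ℤ/2)ⁿ (s_j = 0 if ε_j = 1, s_j = 1 if ε_j = −1) lies in the kernel of M modulo 2, and t ∈ ℝⁿ with M t = 0 (over ℝ), such that h_i = ε_i e^{t_i} g_i for all i. In particular, on a nice nilpotent Lie algebra any two σ-diagonal metrics determining the same vector X in the characterization of Einstein metrics lie in the same orbit under the group G_σ × H of sign changes and diagonal automorphisms. -/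
/-!
Put `r = h / g`, so that `∏ⱼ r_j ^ M_{Ij} = 1` for every row `I`. Each nonzero real factors
as `r_j = (-1) ^ e_j * exp t_j` with `e_j ∈ {0, 1}` and `t_j = log |r_j|`, and then
`∏ⱼ r_j ^ M_{Ij} = (-1) ^ (∑ⱼ M_{Ij} e_j) * exp (∑ⱼ M_{Ij} t_j)`. A product `±1 * exp T` equals
`1` only if the sign is `+1` and `T = 0`, which says exactly that `e` lies in the kernel of `M`
mod 2 and `t` in the kernel of `M` over `ℝ`.
-/

theorem Finset.prod_zpow_eq_zpow_sum₀ {ι G₀ : Type*} [CommGroupWithZero G₀] {a : G₀}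
    (ha : a ≠ 0) (s : Finset ι) (f : ι → ℤ) : ∏ i ∈ s, a ^ f i = a ^ ∑ i ∈ s, f i :=
  cons_induction (by simp) (fun _ _ _ ih ↦ by rw [prod_cons, sum_cons, ih, zpow_add₀ ha]) s

theorem Real.exists_neg_one_zpow_mul_exp_log_eq {x : ℝ} (hx : x ≠ 0) :
    ∃ e : ℤ, (e = 0 ∨ e = 1) ∧ (-1) ^ e * Real.exp (Real.log x) = x := by
  rw [Real.exp_log_eq_abs hx]
  rcases hx.lt_or_gt with hneg | hpos
  · exact ⟨1, Or.inr rfl, by simp [abs_of_neg hneg]⟩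
  · exact ⟨0, Or.inl rfl, by simp [abs_of_pos hpos]⟩

theorem Real.prod_neg_one_zpow_mul_exp_zpow {ι : Type*} [Fintype ι] (e k : ι → ℤ) (t : ι → ℝ) :
    ∏ j, ((-1 : ℝ) ^ e j * Real.exp (t j)) ^ k j =
      (-1) ^ (∑ j, k j * e j) * Real.exp (∑ j, (k j : ℝ) * t j) := by
  have hexp (j : ι) : Real.exp (t j) ^ k j = Real.exp (k j * t j) := by
    rw [mul_comm, Real.exp_mul, Real.rpow_intCast]
  simp_rw [mul_zpow, Finset.prod_mul_distrib, ← zpow_mul, hexp, ← Real.exp_sum, mul_comm (e _)]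
  rw [Finset.prod_zpow_eq_zpow_sum₀ (by norm_num)]

theorem Real.even_and_eq_zero_of_neg_one_zpow_mul_exp_eq_one {N : ℤ} {T : ℝ}
    (h : (-1 : ℝ) ^ N * Real.exp T = 1) : Even N ∧ T = 0 := by
  rcases Int.even_or_odd N with hN | hN
  · rw [hN.neg_one_zpow, one_mul, Real.exp_eq_one_iff] at h
    exact ⟨hN, h⟩
  · rw [hN.neg_one_zpow] at h
    linarith [Real.exp_pos T]

theorem prod_zpow_div_eq_one_of_prod_zpow_eq {ι : Type*} [Fintype ι] {g h : ι → ℝ}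
    (hg : ∀ j, g j ≠ 0) {k : ι → ℤ} (heq : ∏ j, g j ^ k j = ∏ j, h j ^ k j) :
    ∏ j, (h j / g j) ^ k j = 1 := by
  simp_rw [div_zpow]
  rw [Finset.prod_div_distrib, ← heq,
    div_self (Finset.prod_ne_zero_iff.2 fun j _ ↦ zpow_ne_zero _ (hg j))]

/-- If `g, h ∈ (ℝ*)ⁿ` have the same image under the multiplicative map determined by an
integer matrix `M`, then `h_i = ε_i e^{t_i} g_i` for a sign vector `ε` whose associated
mod 2 vector lies in the kernel of `M` mod 2 and a real vector `t` with `M t = 0`. -/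
theorem same_image_iff_sign_and_exp
    (m n : ℕ) (M : Matrix (Fin m) (Fin n) ℤ)
    (g h : Fin n → ℝ) (hg : ∀ j, g j ≠ 0) (hh : ∀ j, h j ≠ 0)
    (heq : ∀ I, (∏ j, g j ^ M I j) = ∏ j, h j ^ M I j) :
    ∃ (ε : Fin n → ℝ) (s : Fin n → ZMod 2) (t : Fin n → ℝ),
      (∀ j, (ε j = 1 ∧ s j = 0) ∨ (ε j = -1 ∧ s j = 1)) ∧
      (∀ I, (∑ j, (M I j : ZMod 2) * s j) = 0) ∧
      (∀ I, (∑ j, (M I j : ℝ) * t j) = 0) ∧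
      (∀ i, h i = ε i * Real.exp (t i) * g i) := by
  choose e he hr using fun j ↦ Real.exists_neg_one_zpow_mul_exp_log_eq (div_ne_zero (hh j) (hg j))
  have hker (I : Fin m) :
      Even (∑ j, M I j * e j) ∧ ∑ j, (M I j : ℝ) * Real.log (h j / g j) = 0 := by
    refine Real.even_and_eq_zero_of_neg_one_zpow_mul_exp_eq_one ?_
    rw [← Real.prod_neg_one_zpow_mul_exp_zpow]
    simp_rw [hr]
    exact prod_zpow_div_eq_one_of_prod_zpow_eq hg (heq I)
  refine ⟨fun j ↦ (-1) ^ e j, fun j ↦ e j, fun j ↦ Real.log (h j / g j),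
    fun j ↦ ?_, fun I ↦ ?_, fun I ↦ (hker I).2, fun i ↦ ?_⟩
  · rcases he j with hj | hj <;> simp [hj]
  · simpa using ZMod.intCast_eq_zero_iff_even.2 (hker I).1
  · rw [hr i, div_mul_cancel₀ _ (hg i)]
end

section
/- Let 𝔤 be the 8-dimensional real vector space with basis e₁,…,e₈ and skew-symmetric bracket determined by [e₁,e₂] = √5 e₅, [e₃,e₄] = √5 e₆, [e₁,e₅] = √3 e₇, [e₂,e₄] = √7 e₇, [e₃,e₆] = √3 e₇, [e₁,e₃] = √7 e₈, [e₂,e₅] = √3 e₈, [e₄,e₆] = √3 e₈ (all other brackets of basis vectors zero). Then 𝔤 is a nilpotent Lie algebra (the Jacobi identity holds), the basis is nice, and the diagonal metric making e₁,…,e₈ orthogonal with ⟨eᵢ,eᵢ⟩ = (1,1,1,1,−1,−1,1,1), of signature (6,2), satisfies condition (E): ric = ½ id. -/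
open scoped BigOperators

/-- Upper-triangular part of the structure constants of the Lie algebra `842:117`:
`[e₁,e₂] = √5 e₅`, `[e₃,e₄] = √5 e₆`, `[e₁,e₅] = √3 e₇`, `[e₂,e₄] = √7 e₇`,
`[e₃,e₆] = √3 e₇`, `[e₁,e₃] = √7 e₈`, `[e₂,e₅] = √3 e₈`, `[e₄,e₆] = √3 e₈`
(basis indexed by `Fin 8`, so `e₁ = e 0`, …, `e₈ = e 7`). -/
noncomputable def v842 : Fin 8 → Fin 8 → Fin 8 → ℝ := fun i j k =>
  if i = 0 ∧ j = 1 ∧ k = 4 then Real.sqrt 5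
  else if i = 2 ∧ j = 3 ∧ k = 5 then Real.sqrt 5
  else if i = 0 ∧ j = 4 ∧ k = 6 then Real.sqrt 3
  else if i = 1 ∧ j = 3 ∧ k = 6 then Real.sqrt 7
  else if i = 2 ∧ j = 5 ∧ k = 6 then Real.sqrt 3
  else if i = 0 ∧ j = 2 ∧ k = 7 then Real.sqrt 7
  else if i = 1 ∧ j = 4 ∧ k = 7 then Real.sqrt 3
  else if i = 3 ∧ j = 5 ∧ k = 7 then Real.sqrt 3
  else 0

/-- The full (skew-symmetric) structure constants. -/
noncomputable def c842 : Fin 8 → Fin 8 → Fin 8 → ℝ := fun i j k =>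
  v842 i j k - v842 j i k


/-!
For a diagonal metric `diag(ε)` in a nice basis, niceness forces every off-diagonal entry of the
Ricci operator to vanish: a nonzero term would need `c_{ilk} c_{ilh} ≠ 0` or `c_{jhi} c_{jki} ≠ 0`
with `h ≠ k`. The diagonal entries are then finite sums of `±c_{ilh}²` and `±c_{hji}²`, which for
`842:117` all equal `½`. The Jacobi identity and nilpotency are checked on the explicit bracket:
it takes values in `span(e₅,…,e₈)`, brackets with that span land in `span(e₇,e₈)`, which is central.
-/

open Matrix Finset

section Ricci

variable {n : ℕ} (c : Fin n → Fin n → Fin n → ℝ) {d : Fin n → ℝ}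

theorem inv_diagonal_of_ne_zero_s16 (hd : ∀ i, d i ≠ 0) : (diagonal d)⁻¹ = diagonal d⁻¹ :=
  inv_eq_left_inv <| by
    rw [diagonal_mul_diagonal, ← diagonal_one]
    exact congrArg diagonal (funext fun i => inv_mul_cancel₀ (hd i))

theorem Ric_diagonal_apply (hd : ∀ i, d i ≠ 0) (h k : Fin n) :
    Ric c (diagonal d) h k =
      1/4 * ∑ i, ∑ l, (d i)⁻¹ * (d l)⁻¹ * d h * (c i l k * c i l h)
      - 1/2 * ∑ j, ∑ i, (d k)⁻¹ * (d j)⁻¹ * d i * (c h j i * c k j i) := by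
  simp only [Ric, of_apply, inv_diagonal_of_ne_zero_s16 hd, diagonal_apply, Pi.inv_apply, mul_ite,
    ite_mul, zero_mul, mul_zero, sum_ite_eq, mem_univ, ↓reduceIte, sum_ite_irrel, sum_const_zero]
  congr 2 <;> refine sum_congr rfl fun _ _ => sum_congr rfl fun _ _ => by ring

theorem Ric_diagonal_apply_of_ne (hd : ∀ i, d i ≠ 0) (hskew : ∀ i j k, c i j k = - c j i k)
    (hk : ∀ i j k k', c i j k ≠ 0 → c i j k' ≠ 0 → k = k')
    (hj : ∀ i j j' k, c i j k ≠ 0 → c i j' k ≠ 0 → j = j') {h k : Fin n} (hhk : h ≠ k) :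
    Ric c (diagonal d) h k = 0 := by
  have h₁ : ∀ i l, c i l k * c i l h = 0 := fun i l => by
    by_contra hne
    exact hhk (hk i l k h (left_ne_zero_of_mul hne) (right_ne_zero_of_mul hne)).symm
  have h₂ : ∀ j i, c h j i * c k j i = 0 := fun j i => by
    by_contra hne
    rw [hskew h, hskew k, neg_mul_neg] at hne
    exact hhk (hj j h k i (left_ne_zero_of_mul hne) (right_ne_zero_of_mul hne))
  simp [Ric_diagonal_apply c hd, h₁, h₂]

end Ricci

def brackets842 : Finset (Fin 8 × Fin 8 × Fin 8) :=
  {(0, 1, 4), (2, 3, 5), (0, 4, 6), (1, 3, 6), (2, 5, 6), (0, 2, 7), (1, 4, 7), (3, 5, 7)}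

theorem v842_ne_zero_iff {i j k : Fin 8} : v842 i j k ≠ 0 ↔ (i, j, k) ∈ brackets842 := by
  unfold v842 brackets842
  split_ifs <;> simp_all

theorem c842_ne_zero_iff {i j k : Fin 8} :
    c842 i j k ≠ 0 ↔ (i, j, k) ∈ brackets842 ∨ (j, i, k) ∈ brackets842 := by
  have hasymm : ∀ i j k : Fin 8, (i, j, k) ∈ brackets842 → (j, i, k) ∉ brackets842 := by decide
  have hij := v842_ne_zero_iff (i := i) (j := j) (k := k)
  have hji := v842_ne_zero_iff (i := j) (j := i) (k := k)
  by_cases h₁ : (i, j, k) ∈ brackets842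
  · have h₂ := hasymm i j k h₁
    simp_all [c842]
  · by_cases h₂ : (j, i, k) ∈ brackets842 <;> simp_all [c842]

theorem c842_skew (i j k : Fin 8) : c842 i j k = - c842 j i k := by
  simp only [c842]
  ring

set_option synthInstance.maxSize 1024 in
theorem c842_nice_k (i j k k' : Fin 8) : c842 i j k ≠ 0 → c842 i j k' ≠ 0 → k = k' := by
  simp only [c842_ne_zero_iff]
  revert i j k k'
  decide

set_option synthInstance.maxSize 1024 in
theorem c842_nice_j (i j j' k : Fin 8) : c842 i j k ≠ 0 → c842 i j' k ≠ 0 → j = j' := by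
  simp only [c842_ne_zero_iff]
  revert i j j' k
  decide

noncomputable def bracket842 (x y : Fin 8 → ℝ) : Fin 8 → ℝ := fun k =>
  if k = 4 then √5 * (x 0 * y 1 - x 1 * y 0)
  else if k = 5 then √5 * (x 2 * y 3 - x 3 * y 2)
  else if k = 6 then √3 * (x 0 * y 4 - x 4 * y 0) + √7 * (x 1 * y 3 - x 3 * y 1)
      + √3 * (x 2 * y 5 - x 5 * y 2)
  else if k = 7 then √7 * (x 0 * y 2 - x 2 * y 0) + √3 * (x 1 * y 4 - x 4 * y 1)
      + √3 * (x 3 * y 5 - x 5 * y 3)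
  else 0

theorem bracket_c842 : bracket c842 = bracket842 := by
  funext x y k
  fin_cases k <;> simp [bracket, c842, v842, bracket842, Fin.sum_univ_eight] <;> ring

theorem c842_jacobi (x y z : Fin 8 → ℝ) :
    bracket c842 (bracket c842 x y) z + bracket c842 (bracket c842 y z) x
      + bracket c842 (bracket c842 z x) y = 0 := by
  funext k
  simp only [bracket_c842, Pi.add_apply, Pi.zero_apply]
  fin_cases k <;> simp [bracket842] <;> ring

theorem c842_bracket_bracket_bracket (x y z w : Fin 8 → ℝ) :
    bracket c842 x (bracket c842 y (bracket c842 z w)) = 0 := by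
  funext k
  simp only [bracket_c842]
  fin_cases k <;> simp [bracket842]

theorem metric842_ne_zero (i : Fin 8) : (![1, 1, 1, 1, -1, -1, 1, 1] : Fin 8 → ℝ) i ≠ 0 := by
  fin_cases i <;> norm_num

theorem isNiceNilpotent_c842 : IsNiceNilpotent c842 where
  skew := c842_skew
  jacobi := c842_jacobi
  nilpotent := ⟨3, fun v w => by simpa using c842_bracket_bracket_bracket (v 0) (v 1) (v 2) w⟩
  nice_k := c842_nice_k
  nice_j := c842_nice_j

theorem Ric_c842_apply_self (h : Fin 8) :
    Ric c842 (diagonal ![1, 1, 1, 1, -1, -1, 1, 1]) h h = 1/2 := by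
  rw [Ric_diagonal_apply c842 metric842_ne_zero]
  fin_cases h <;> simp [Fin.sum_univ_eight, c842, v842] <;> norm_num

/-- The Lie algebra `842:117` with the given structure constants is nilpotent, the given
basis is nice, and the diagonal metric `⟨eᵢ,eᵢ⟩ = (1,1,1,1,−1,−1,1,1)` (signature `(6,2)`)
satisfies (E): `ric = ½ id`. -/
theorem einstein_842_117_diagonal :
    IsNiceNilpotent c842 ∧
    EinsteinE c842 (Matrix.diagonal ![1, 1, 1, 1, -1, -1, 1, 1]) := by
  refine ⟨isNiceNilpotent_c842, ?_⟩
  ext h k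
  rw [Matrix.smul_apply, one_apply, smul_eq_mul]
  rcases eq_or_ne h k with rfl | hhk
  · simpa using Ric_c842_apply_self h
  · simpa [hhk] using Ric_diagonal_apply_of_ne c842 metric842_ne_zero
      c842_skew c842_nice_k c842_nice_j hhk
end
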